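/- arXiv:2402.09900 — 4 statements merged into one kernel-verified Lean document; each statement's English description precedes it below -/
import Mathlib

section
/- Let γ, λ : ℝ with 0 ≤ γ*λ < 1, t : ℕ, and let δ : ℕ → ℝ be bounded (there exists C ≥ 0 with |δ i| ≤ C for all i). Let • be the discounted-return operation on ℝ × ℝ defined by (a, g) • (a', g') = (a * a', a * g' + g). Then l ↦ (γ*λ)^l * δ (t+l) is summable, and the second component of the left fold of • with initial value (1, 0) over [(γ*λ, δ t), …, (γ*λ, δ (t+n))] converges, as n → ∞, to the GAE target ∑'_{l} (γ*λ)^l * δ (t+l). -/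
open Filter Topology

/-- The discounted-return operation on `ℝ × ℝ`:
`(a, g) • (a', g') = (a * a', a * g' + g)`. -/
def discOp (p q : ℝ × ℝ) : ℝ × ℝ := (p.1 * q.1, p.1 * q.2 + p.2)

lemma discOp_foldl_eq (x : ℝ) (f : ℕ → ℝ) :
    ∀ (m : ℕ) (a g : ℝ),
      List.foldl discOp (a, g) ((List.range m).map (fun l => (x, f l)))
        = (a * x ^ m, g + a * ∑ l ∈ Finset.range m, x ^ l * f l) := by
  intro m
  induction m with
  | zero => intro a g; simp
  | succ m ih =>
    intro a g
    rw [List.range_succ, List.map_append, List.foldl_append, ih]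
    simp [discOp, Finset.sum_range_succ, pow_succ]
    exact ⟨by ring, by ring⟩

/-- For `0 ≤ γ*λ < 1` and bounded TD residuals, `l ↦ (γ*λ)^l * δ (t+l)` is
summable and the second component of the fold converges to the GAE target
`∑'_{l} (γ*λ)^l * δ (t+l)`. -/
theorem discOp_foldl_gae_tendsto (γ lam : ℝ) (h0 : 0 ≤ γ * lam) (h1 : γ * lam < 1)
    (t : ℕ) (δ : ℕ → ℝ) (C : ℝ) (hC : 0 ≤ C) (hδ : ∀ i, |δ i| ≤ C) :
    Summable (fun l => (γ * lam) ^ l * δ (t + l)) ∧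
    Tendsto
      (fun n =>
        (List.foldl discOp ((1 : ℝ), (0 : ℝ))
          ((List.range (n + 1)).map (fun l => (γ * lam, δ (t + l))))).2)
      atTop (𝓝 (∑' l, (γ * lam) ^ l * δ (t + l))) := by
  have hsum : Summable (fun l => (γ * lam) ^ l * δ (t + l)) := by
    apply Summable.of_norm
    apply Summable.of_nonneg_of_le (fun l => norm_nonneg _)
      (fun l => ?_) (((summable_geometric_of_lt_one h0 h1).mul_right C))
    rw [Real.norm_eq_abs, abs_mul, abs_pow, abs_of_nonneg h0]
    exact mul_le_mul_of_nonneg_left (hδ _) (pow_nonneg h0 l)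
  refine ⟨hsum, ?_⟩
  have key : ∀ n : ℕ,
      (List.foldl discOp ((1 : ℝ), (0 : ℝ))
        ((List.range (n + 1)).map (fun l => (γ * lam, δ (t + l))))).2
      = ∑ l ∈ Finset.range (n + 1), (γ * lam) ^ l * δ (t + l) := by
    intro n
    rw [discOp_foldl_eq (γ * lam) (fun l => δ (t + l)) (n + 1) 1 0]
    simp
  simp only [key]
  exact hsum.hasSum.tendsto_sum_nat.comp (tendsto_add_atTop_nat 1)
end

section
/- Fix m, c : ℕ and a matrix E : Matrix (Fin m) (Fin c) ℂ. Define on (Matrix (Fin m) (Fin c) ℂ) × ℕ the binary operation • given by (X, t) • (X', t') = (hadamard X (E.map' t') + X', t + t'), where hadamard denotes the entrywise (Hadamard) product and E.map' t' denotes the entrywise power (fun i j => (E i j)^t'). Then • is associative and (0, 0) is a two-sided identity, so this is a monoid (the Fast and Forgetful Memory aggregation monoid). -/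
open Matrix

/-- The Fast and Forgetful Memory aggregation operation on state matrices paired
with timestep counters:
`(X, t) • (X', t') = (X ⊙ E^{∘t'} + X', t + t')`, where `⊙` is the Hadamard
product and `E^{∘t'}` is the entrywise `t'`-th power of `E`. -/
def ffmOp (m c : ℕ) (E : Matrix (Fin m) (Fin c) ℂ)
    (p q : Matrix (Fin m) (Fin c) ℂ × ℕ) : Matrix (Fin m) (Fin c) ℂ × ℕ :=
  (Matrix.hadamard p.1 (Matrix.of fun i j => (E i j) ^ q.2) + q.1, p.2 + q.2)

/-- The FFM operation is associative and `(0, 0)` is a two-sided identity, so it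
forms a monoid. -/
theorem ffmOp_monoid (m c : ℕ) (E : Matrix (Fin m) (Fin c) ℂ) :
    (∀ x y z : Matrix (Fin m) (Fin c) ℂ × ℕ,
      ffmOp m c E (ffmOp m c E x y) z = ffmOp m c E x (ffmOp m c E y z)) ∧
    (∀ x : Matrix (Fin m) (Fin c) ℂ × ℕ,
      ffmOp m c E ((0 : Matrix (Fin m) (Fin c) ℂ), 0) x = x ∧
      ffmOp m c E x ((0 : Matrix (Fin m) (Fin c) ℂ), 0) = x) := by
  constructor
  · intro x y z
    simp only [ffmOp, Prod.mk.injEq]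
    constructor
    · ext i j
      simp [Matrix.hadamard, pow_add]
      ring
    · omega
  · intro x
    constructor <;>
    · simp only [ffmOp]
      refine Prod.ext ?_ (by omega)
      ext i j
      simp [Matrix.hadamard]
end

section
/- Fix m, c : ℕ, a matrix E : Matrix (Fin m) (Fin c) ℂ, and a sequence of input matrices A : ℕ → Matrix (Fin m) (Fin c) ℂ. Let • be the FFM operation on (Matrix (Fin m) (Fin c) ℂ) × ℕ defined by (X, t) • (X', t') = (hadamard X (entrywise t'-th power of E) + X', t + t'). Then for every n : ℕ, the left fold of • with initial value (0, 0) over the list [(A 1, 1), (A 2, 1), …, (A n, 1)] equals (∑_{j=1}^{n} hadamard (A j) (entrywise (n−j)-th power of E), n); i.e., the fold computes the exponentially decayed aggregate of the inputs with decay governed entrywise by E. -/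
open Matrix

/-- The FFM fold over `[(A 1, 1), …, (A n, 1)]` computes the exponentially
decayed aggregate `(∑_{j=1}^{n} A j ⊙ E^{∘(n−j)}, n)`. -/
theorem ffmOp_foldl (m c : ℕ) (E : Matrix (Fin m) (Fin c) ℂ)
    (A : ℕ → Matrix (Fin m) (Fin c) ℂ) (n : ℕ) :
    List.foldl (ffmOp m c E) ((0 : Matrix (Fin m) (Fin c) ℂ), 0)
        ((List.range n).map (fun j => (A (j + 1), 1))) =
      (∑ j ∈ Finset.range n,
        Matrix.hadamard (A (j + 1)) (Matrix.of fun i k => (E i k) ^ (n - (j + 1))), n) := by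
  induction n with
  | zero => simp
  | succ n ih =>
    rw [List.range_succ, List.map_append, List.foldl_append, ih]
    refine Prod.ext ?_ (by simp [ffmOp])
    show Matrix.hadamard _ _ + _ = _
    ext i k
    simp only [Matrix.add_apply, Matrix.hadamard_apply, Matrix.of_apply,
      Finset.sum_apply, Matrix.sum_apply, Finset.sum_range_succ, pow_one,
      Nat.succ_sub_succ, Nat.sub_self, pow_zero, mul_one, Finset.sum_mul]
    congr 1
    refine Finset.sum_congr rfl fun j hj => ?_
    rw [mul_assoc, ← pow_succ]
    have hj' := Finset.mem_range.mp hj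
    have : n - (j + 1) + 1 = n - j := by omega
    rw [this]
end

section
/- Let γ : ℝ and r : ℕ → ℝ. Let • be the discounted-return operation on ℝ × ℝ, (a, x) • (a', x') = (a * a', a * x' + x), and let op be the resettable operation on (ℝ × ℝ) × Bool built from it: op (P, b) (P', b') = ((if b' then (1, 0) else P) • P', b || b'). For n, k : ℕ with k ≤ n, consider the list whose i-th element (for i = 0, …, n) is ((γ, r i), if i = k then true else false), i.e., a reset occurs at index k. Then the first component of List.foldl op ((1, 0), false) over this list equals (γ^(n−k+1), ∑_{i=k}^{n} γ^(i−k) * r i): the resettable discounted-return memoroid computes the discounted return of only the most recent episode. -/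
/-- The resettable operation on `(ℝ × ℝ) × Bool` built from the discounted-return
monoid with identity `(1, 0)`:
`op (P, b) (P', b') = ((if b' then (1, 0) else P) • P', b || b')`. -/
def discResetOp (x y : (ℝ × ℝ) × Bool) : (ℝ × ℝ) × Bool :=
  (discOp (if y.2 then ((1 : ℝ), (0 : ℝ)) else x.1) y.1, x.2 || y.2)

lemma discResetOp_foldl_aux (γ : ℝ) (r : ℕ → ℝ) (k : ℕ) :
    ∀ n, k ≤ n →
    List.foldl discResetOp (((1 : ℝ), (0 : ℝ)), false)
        ((List.range (n + 1)).map
          (fun i => ((γ, r i), if i = k then true else false))) =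
      ((γ ^ (n - k + 1), ∑ i ∈ Finset.Icc k n, γ ^ (i - k) * r i), true) := by
  intro n
  induction n with
  | zero =>
    intro hk
    interval_cases k
    simp [List.range_succ, discResetOp, discOp]
  | succ n ih =>
    intro hk
    rw [List.range_succ, List.map_append, List.foldl_append]
    rcases eq_or_lt_of_le hk with h | h
    · -- k = n + 1 : the last element is the reset
      subst h
      simp [discResetOp, discOp]
    · have hkn : k ≤ n := Nat.lt_succ_iff.mp h
      rw [ih hkn]
      have hne : n + 1 ≠ k := by omega
      simp only [List.map_cons, List.map_nil, List.foldl_cons, List.foldl_nil,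
        discResetOp, if_neg hne, discOp]
      have h1 : n + 1 - k + 1 = (n - k + 1) + 1 := by omega
      rw [Finset.sum_Icc_succ_top hk]
      simp only [if_neg (Bool.false_ne_true), Bool.or_false]
      refine Prod.ext (Prod.ext ?_ ?_) rfl
      · show γ ^ (n - k + 1) * γ = γ ^ (n + 1 - k + 1)
        rw [← pow_succ, h1]
      · show γ ^ (n - k + 1) * r (n + 1) + _ = _
        rw [Nat.succ_sub hkn, pow_succ]
        ring

/-- With a reset at index `k ≤ n`, the resettable discounted-return memoroid
computes the discounted return of only the most recent episode:
the first component of the fold is `(γ^(n−k+1), ∑_{i=k}^{n} γ^(i−k) * r i)`. -/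
theorem discResetOp_foldl (γ : ℝ) (r : ℕ → ℝ) (n k : ℕ) (hk : k ≤ n) :
    (List.foldl discResetOp (((1 : ℝ), (0 : ℝ)), false)
        ((List.range (n + 1)).map
          (fun i => ((γ, r i), if i = k then true else false)))).1 =
      (γ ^ (n - k + 1), ∑ i ∈ Finset.Icc k n, γ ^ (i - k) * r i) := by
  rw [discResetOp_foldl_aux γ r k n hk]
end
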